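/- arXiv:2403.17868 — 2 statements merged into one kernel-verified Lean document; each statement's English description precedes it below -/
import Mathlib

section
/- Helstrom–Holevo theorem (one copy, finite dimension): Let ρ and σ be quantum states on ℂ^d, let p ∈ (0,1) and q := 1 − p. Then inf{ p·Tr[(I − Λ)ρ] + q·Tr[Λσ] : Λ a d×d complex matrix with 0 ≤ Λ ≤ I } = (1/2)·(1 − ‖p·ρ − q·σ‖₁), and the infimum is attained. -/
open scoped ComplexOrder Classical

noncomputable section

namespace QHT

variable {ι : Type*} [Fintype ι] [DecidableEq ι]

/-- The positive semidefinite square root of a positive semidefinite matrix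
(the definition of `Matrix.PosSemidef.sqrt` in the older Mathlib). -/
def psdSqrt {A : Matrix ι ι ℂ} (hA : A.PosSemidef) : Matrix ι ι ℂ :=
  hA.1.eigenvectorUnitary.1 * Matrix.diagonal ((↑) ∘ (√·) ∘ hA.1.eigenvalues) *
    (star hA.1.eigenvectorUnitary : Matrix ι ι ℂ)

/-- Trace norm of a complex matrix: `Tr[√(Aᴴ A)]`. -/
def traceNorm (A : Matrix ι ι ℂ) : ℝ :=
  ((psdSqrt (Matrix.posSemidef_conjTranspose_mul_self A)).trace).re

/-- A quantum state: positive semidefinite with unit trace. -/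
def IsState (ρ : Matrix ι ι ℂ) : Prop := ρ.PosSemidef ∧ ρ.trace = 1

/-- Positive semidefinite square root (junk value `0` off the PSD matrices). -/
def matSqrt (A : Matrix ι ι ℂ) : Matrix ι ι ℂ :=
  if h : A.PosSemidef then psdSqrt h else 0

/-- Real power of a Hermitian matrix, applying `x ↦ x ^ s` to positive
eigenvalues and `x ↦ 0` to the remaining ones (so `A ^ 0` is the support
projection); junk value `0` off the Hermitian matrices. -/
def matRpow (A : Matrix ι ι ℂ) (s : ℝ) : Matrix ι ι ℂ :=
  if h : A.IsHermitian then
    (h.eigenvectorUnitary : Matrix ι ι ℂ) *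
      Matrix.diagonal (fun i =>
        ((if 0 < h.eigenvalues i then (h.eigenvalues i) ^ s else 0 : ℝ) : ℂ)) *
      (star (h.eigenvectorUnitary : Matrix ι ι ℂ))
  else 0

/-- Fidelity `F(ρ,σ) = ‖√ρ √σ‖₁²`. -/
def Fid (ρ σ : Matrix ι ι ℂ) : ℝ := (traceNorm (matSqrt ρ * matSqrt σ)) ^ 2

/-- Holevo fidelity `F_H(ρ,σ) = (Tr[√ρ √σ])²`. -/
def FidH (ρ σ : Matrix ι ι ℂ) : ℝ := (((matSqrt ρ * matSqrt σ).trace).re) ^ 2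

/-- `Q_s(A‖B) = Tr[A^s B^{1-s}]`. -/
def Qs (s : ℝ) (A B : Matrix ι ι ℂ) : ℝ := ((matRpow A s * matRpow B (1 - s)).trace).re

/-- `Q_min(A‖B) = min_{s ∈ [0,1]} Q_s(A‖B)`. -/
def Qmin (A B : Matrix ι ι ℂ) : ℝ :=
  sInf { x : ℝ | ∃ s ∈ Set.Icc (0 : ℝ) 1, x = Qs s A B }

/-- Bures distance. -/
def dB (ρ σ : Matrix ι ι ℂ) : ℝ := Real.sqrt (2 * (1 - Real.sqrt (Fid ρ σ)))

/-- Quantum Hellinger distance. -/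
def dH (ρ σ : Matrix ι ι ℂ) : ℝ := Real.sqrt (2 * (1 - Real.sqrt (FidH ρ σ)))

/-- `n`-fold Kronecker (tensor) power of a matrix. -/
def tensorPow {d : ℕ} (A : Matrix (Fin d) (Fin d) ℂ) (n : ℕ) :
    Matrix (Fin n → Fin d) (Fin n → Fin d) ℂ :=
  Matrix.of fun i j => ∏ k, A (i k) (j k)

/-- Optimal error probability of symmetric binary quantum hypothesis testing
with `n` copies. -/
def pErr {d : ℕ} (p : ℝ) (ρ : Matrix (Fin d) (Fin d) ℂ) (q : ℝ)
    (σ : Matrix (Fin d) (Fin d) ℂ) (n : ℕ) : ℝ :=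
  sInf { x : ℝ | ∃ Λ : Matrix (Fin n → Fin d) (Fin n → Fin d) ℂ,
    Λ.PosSemidef ∧ (1 - Λ).PosSemidef ∧
    x = p * (((1 - Λ) * tensorPow ρ n).trace).re + q * ((Λ * tensorPow σ n).trace).re }

/-- Sample complexity of symmetric binary quantum hypothesis testing. -/
def sampleComplexity {d : ℕ} (p : ℝ) (ρ : Matrix (Fin d) (Fin d) ℂ) (q : ℝ)
    (σ : Matrix (Fin d) (Fin d) ℂ) (ε : ℝ) : ℕ :=
  sInf { n : ℕ | 1 ≤ n ∧ pErr p ρ q σ n ≤ ε }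

/-- Optimal type II error `β_ε(ρ‖σ)` of asymmetric hypothesis testing. -/
def betaErr (ε : ℝ) (ρ σ : Matrix ι ι ℂ) : ℝ :=
  sInf { x : ℝ | ∃ Λ : Matrix ι ι ℂ, Λ.PosSemidef ∧ (1 - Λ).PosSemidef ∧
    (((1 - Λ) * ρ).trace).re ≤ ε ∧ x = ((Λ * σ).trace).re }

/-- Sample complexity of asymmetric binary quantum hypothesis testing. -/
def sampleComplexityAsym {d : ℕ} (ρ σ : Matrix (Fin d) (Fin d) ℂ) (ε δ : ℝ) : ℕ :=
  sInf { n : ℕ | 1 ≤ n ∧ betaErr ε (tensorPow ρ n) (tensorPow σ n) ≤ δ }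

/-- Petz–Rényi divergence `D_α(ρ‖σ)`. -/
def petzRenyi (α : ℝ) (ρ σ : Matrix ι ι ℂ) : ℝ :=
  (1 / (α - 1)) * Real.log (((matRpow ρ α * matRpow σ (1 - α)).trace).re)

/-- Sandwiched Rényi divergence `D̃_α(ρ‖σ)`. -/
def sandwichedRenyi (α : ℝ) (ρ σ : Matrix ι ι ℂ) : ℝ :=
  (1 / (α - 1)) * Real.log
    (((matRpow (matRpow σ ((1 - α) / (2 * α)) * ρ * matRpow σ ((1 - α) / (2 * α))) α).trace).re)

/-!
With `A = p • ρ - q • σ`, the error of a test `0 ≤ Λ ≤ 1` is `p - Re Tr[Λ A]`. Splitting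
`A = A⁺ - A⁻`, we get `Tr[Λ A] ≤ Tr[Λ A⁺] ≤ Tr[A⁺]`, since the trace of a product of two positive
matrices is nonnegative; both steps are equalities for the spectral projection of `A` onto
`[0, ∞)`. Finally `2 Tr[A⁺] = Tr|A| + Tr A = ‖A‖₁ + p - q`.
-/

open scoped MatrixOrder

section RCLike

variable {𝕜 : Type*} [RCLike 𝕜]

lemma re_trace_mul_nonneg {A B : Matrix ι ι 𝕜} (hA : 0 ≤ A) (hB : 0 ≤ B) :
    0 ≤ RCLike.re (A * B).trace := by
  have key : 0 ≤ (CFC.sqrt B * A * CFC.sqrt B).trace := Matrix.PosSemidef.trace_nonneg <|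
    Matrix.nonneg_iff_posSemidef.mp (conjugate_nonneg_of_nonneg hA (CFC.sqrt_nonneg B))
  rw [Matrix.mul_assoc, Matrix.trace_mul_comm, Matrix.mul_assoc, CFC.sqrt_mul_sqrt_self B hB] at key
  exact (RCLike.nonneg_iff.mp key).1

lemma re_trace_mul_le_re_trace_posPart {Λ A : Matrix ι ι 𝕜} (h0 : 0 ≤ Λ) (h1 : Λ ≤ 1)
    (hA : A.IsHermitian) : RCLike.re (Λ * A).trace ≤ RCLike.re (A⁺).trace := by
  have hpos := re_trace_mul_nonneg (sub_nonneg.mpr h1) (CFC.posPart_nonneg A)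
  have hneg := re_trace_mul_nonneg h0 (CFC.negPart_nonneg A)
  have hsplit : Λ * A = Λ * A⁺ - Λ * A⁻ := by
    rw [← Matrix.mul_sub, CFC.posPart_sub_negPart A hA.isSelfAdjoint]
  rw [Matrix.sub_mul, Matrix.one_mul] at hpos
  simp only [hsplit, Matrix.trace_sub, map_sub] at *
  linarith

lemma exists_nonneg_le_one_mul_eq_posPart {A : Matrix ι ι 𝕜} (hA : A.IsHermitian) :
    ∃ P : Matrix ι ι 𝕜, 0 ≤ P ∧ P ≤ 1 ∧ P * A = A⁺ := by
  set f : ℝ → ℝ := fun x => if 0 ≤ x then 1 else 0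
  have hf : ContinuousOn f (spectrum ℝ A) := A.finite_real_spectrum.continuousOn f
  refine ⟨cfc f A, cfc_nonneg fun x _ => ?_, cfc_le_one f A fun x _ => ?_, ?_⟩
  · simp only [f]; split_ifs <;> norm_num
  · simp only [f]; split_ifs <;> norm_num
  · rw [CFC.posPart_def, cfcₙ_eq_cfc]
    calc cfc f A * A = cfc (fun x => f x * x) A := by rw [cfc_mul f (fun x => x) A, cfc_id' ℝ A]
      _ = cfc (·⁺) A := cfc_congr fun x _ => ?_
    simp only [f]; split_ifs with h
    · simp [posPart_of_nonneg h]
    · simp [posPart_of_nonpos (le_of_not_ge h)]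

end RCLike

lemma psdSqrt_eq_cfc {A : Matrix ι ι ℂ} (hA : A.PosSemidef) : psdSqrt hA = cfc Real.sqrt A := by
  rw [hA.1.cfc_eq, Matrix.IsHermitian.cfc, Unitary.conjStarAlgAut_apply]
  rfl

lemma traceNorm_eq_re_trace_abs (A : Matrix ι ι ℂ) : traceNorm A = (CFC.abs A).trace.re := by
  rw [traceNorm, psdSqrt_eq_cfc, CFC.abs, Matrix.star_eq_conjTranspose,
    CFC.sqrt_eq_real_sqrt _ (Matrix.posSemidef_conjTranspose_mul_self A).nonneg, cfcₙ_eq_cfc]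

lemma re_trace_posPart_eq {A : Matrix ι ι ℂ} (hA : A.IsHermitian) :
    (A⁺).trace.re = (traceNorm A + A.trace.re) / 2 := by
  have h := congrArg (fun M : Matrix ι ι ℂ => M.trace.re) (CFC.abs_add_self A hA.isSelfAdjoint)
  simp only [Matrix.trace_add, two_smul, Complex.add_re] at h
  rw [traceNorm_eq_re_trace_abs]
  linarith

lemma weighted_error_eq_sub_re_trace_mul {ρ : Matrix ι ι ℂ} (hρ : ρ.trace = 1)
    (σ Λ : Matrix ι ι ℂ) (p q : ℝ) :
    p * ((1 - Λ) * ρ).trace.re + q * (Λ * σ).trace.re = p - (Λ * (p • ρ - q • σ)).trace.re := by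
  simp only [Matrix.sub_mul, Matrix.one_mul, Matrix.mul_sub, Matrix.mul_smul, Matrix.trace_sub,
    Matrix.trace_smul, hρ, Complex.sub_re, Complex.one_re, Complex.real_smul, Complex.re_ofReal_mul]
  ring

theorem helstrom_holevo_general {d : ℕ} (ρ σ : Matrix (Fin d) (Fin d) ℂ)
    (hρ : IsState ρ) (hσ : IsState σ)
    (p q : ℝ) (hq : q = 1 - p) :
    IsLeast { x : ℝ | ∃ Λ : Matrix (Fin d) (Fin d) ℂ,
        Λ.PosSemidef ∧ (1 - Λ).PosSemidef ∧
        x = p * (((1 - Λ) * ρ).trace).re + q * ((Λ * σ).trace).re }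
      ((1 / 2) * (1 - traceNorm (p • ρ - q • σ))) := by
  set A := p • ρ - q • σ
  have hA : A.IsHermitian :=
    ((IsSelfAdjoint.all p).smul hρ.1.1).sub ((IsSelfAdjoint.all q).smul hσ.1.1)
  have hvalue : (1 / 2) * (1 - traceNorm A) = p - (A⁺).trace.re := by
    have htrace : A.trace.re = p - q := by simp [A, hρ.2, hσ.2]
    rw [re_trace_posPart_eq hA, htrace, hq]
    ring
  simp only [weighted_error_eq_sub_re_trace_mul hρ.2, hvalue]
  -- under `MatrixOrder`, `Λ ≤ 1` is by definition `(1 - Λ).PosSemidef`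
  constructor
  · obtain ⟨P, hP0, hP1, hPA⟩ := exists_nonneg_le_one_mul_eq_posPart hA
    exact ⟨P, Matrix.nonneg_iff_posSemidef.mp hP0, hP1, by rw [hPA]⟩
  · rintro _ ⟨Λ, h0, h1, rfl⟩
    exact sub_le_sub_left (re_trace_mul_le_re_trace_posPart h0.nonneg h1 hA) p

/-- **Helstrom–Holevo theorem** (one copy, finite dimension): the optimal error
probability of symmetric binary quantum hypothesis testing equals
`(1/2)(1 - ‖pρ - qσ‖₁)`, and the infimum is attained. -/
theorem helstrom_holevo {d : ℕ} (ρ σ : Matrix (Fin d) (Fin d) ℂ)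
    (hρ : IsState ρ) (hσ : IsState σ)
    (p q : ℝ) (hp : p ∈ Set.Ioo (0 : ℝ) 1) (hq : q = 1 - p) :
    IsLeast { x : ℝ | ∃ Λ : Matrix (Fin d) (Fin d) ℂ,
        Λ.PosSemidef ∧ (1 - Λ).PosSemidef ∧
        x = p * (((1 - Λ) * ρ).trace).re + q * ((Λ * σ).trace).re }
      ((1 / 2) * (1 - traceNorm (p • ρ - q • σ))) :=
  helstrom_holevo_general ρ σ hρ hσ p q hq

end QHT

end
end

section
/- Sample complexity of symmetric binary quantum hypothesis testing for two pure states: Let ψ, φ be unit vectors in ℂ^d with 0 < |⟨ψ,φ⟩| < 1, let p ∈ (0,1), q := 1 − p, and let ε ∈ (0, min{p,q}). Set F := |⟨ψ,φ⟩|². Then n*(p, ψψ*, q, φφ*, ε) = ⌈ ln( pq / (ε(1−ε)) ) / (−ln F) ⌉, where ψψ* denotes the rank-one projection onto ψ. -/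
open scoped ComplexOrder Classical

noncomputable section

/-! The optimal error for two pure states depends only on their overlap `c = |⟨u, v⟩|` and is
the Helstrom value `(1 - √(1 - 4pqc²)) / 2`. It is a lower bound because, for a test `0 ≤ Λ ≤ 1`,
Cauchy–Schwarz for the semi-inner products of `Λ` and `1 - Λ` gives
`c ≤ √(ab) + √((1 - a)(1 - b))` with `a = ⟨u, Λu⟩`, `b = ⟨v, Λv⟩`; it is attained by the projection
onto the normalisation of `(1 + t) u - 2q⟨v, u⟩ v`, where `t = √(1 - 4pqc²)`.
The `n`-copy states are again pure, with overlap `cⁿ`, so with `F = c²` the error is at most `ε`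
iff `Fⁿ ≤ ε(1 - ε)/(pq)`, i.e. iff `n ≥ log(pq/(ε(1 - ε))) / (-log F)`. -/

namespace QHT

open Matrix

def helstromError (p q F : ℝ) : ℝ := (1 - √(1 - 4 * p * q * F)) / 2

theorem helstromError_le {p q a b F : ℝ} (hp : 0 ≤ p) (hq : 0 ≤ q) (hpq : p + q = 1)
    (ha₀ : 0 ≤ a) (ha₁ : a ≤ 1) (hb₀ : 0 ≤ b) (hb₁ : b ≤ 1)
    (hF : F ≤ (√(a * b) + √((1 - a) * (1 - b))) ^ 2) :
    helstromError p q F ≤ p * (1 - a) + q * b := by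
  obtain ⟨x, hx, rfl⟩ : ∃ x, 0 ≤ x ∧ x ^ 2 = a := ⟨√a, by positivity, Real.sq_sqrt ha₀⟩
  obtain ⟨y, hy, rfl⟩ : ∃ y, 0 ≤ y ∧ y ^ 2 = b := ⟨√b, by positivity, Real.sq_sqrt hb₀⟩
  obtain ⟨x', hx', hxx'⟩ : ∃ x', 0 ≤ x' ∧ x' ^ 2 = 1 - x ^ 2 :=
    ⟨√(1 - x ^ 2), by positivity, Real.sq_sqrt (by linarith)⟩
  obtain ⟨y', hy', hyy'⟩ : ∃ y', 0 ≤ y' ∧ y' ^ 2 = 1 - y ^ 2 :=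
    ⟨√(1 - y ^ 2), by positivity, Real.sq_sqrt (by linarith)⟩
  rw [← hxx', ← hyy', ← mul_pow, ← mul_pow, Real.sqrt_sq (by positivity),
    Real.sqrt_sq (by positivity)] at hF
  have hsum_sq : (1 - 2 * (p * (1 - x ^ 2) + q * y ^ 2)) ^ 2 + 4 * p * q * (x * y + x' * y') ^ 2
      + 4 * (p * x * x' - q * y * y') ^ 2 = 1 := by
    obtain rfl : q = 1 - p := by linarith
    linear_combination (4 * p * (1 - p) * y' ^ 2 + 4 * p ^ 2 * x ^ 2) * hxx'
      + (4 * p * (1 - p) * (1 - x ^ 2) + 4 * (1 - p) ^ 2 * y ^ 2) * hyy'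
  have hroot : 1 - 2 * (p * (1 - x ^ 2) + q * y ^ 2) ≤ √(1 - 4 * p * q * F) := by
    apply Real.le_sqrt_of_sq_le
    nlinarith [mul_nonneg hp hq, sq_nonneg (p * x * x' - q * y * y')]
  rw [helstromError]
  linarith

/-- For unit vectors `u`, `v` with `|⟨u, v⟩| = c`, the vector `w = a u - b ⟨v, u⟩ v` has
`⟨u, w⟩ = a - bc²` and `|⟨v, w⟩| = c |a - b|`: the two equations say that `w` is a unit vector and
that the projection onto it attains the Helstrom error. -/
theorem exists_helstrom_coeffs {p q c : ℝ} (hpq : p + q = 1) (hc₀ : 0 ≤ c) (hc₁ : c < 1) :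
    ∃ a b : ℝ, a ^ 2 - 2 * a * b * c ^ 2 + b ^ 2 * c ^ 2 = 1 ∧
      p * (1 - (a - b * c ^ 2) ^ 2) + q * c ^ 2 * (a - b) ^ 2 = helstromError p q (c ^ 2) := by
  set t := √(1 - 4 * p * q * c ^ 2)
  have ht₀ : 0 ≤ t := Real.sqrt_nonneg _
  have ht : t ^ 2 = 1 - 4 * p * q * c ^ 2 := by
    refine Real.sq_sqrt ?_
    have : 1 - 4 * p * q * c ^ 2 = (p - q) ^ 2 * c ^ 2 + 1 - c ^ 2 := by
      linear_combination (-(p + q + 1) * c ^ 2) * hpq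
    nlinarith
  set A := 1 + t - 2 * q * c ^ 2
  have hN_sq_pos : 0 < A ^ 2 + 4 * q ^ 2 * c ^ 2 * (1 - c ^ 2) := by
    rcases eq_or_ne (q * c) 0 with h | h
    · have hA : A = 1 + t := by simp only [A]; linear_combination (-2 * c) * h
      nlinarith
    · have : 0 < (q * c) ^ 2 * (1 - c ^ 2) := by
        apply mul_pos (by positivity); nlinarith
      nlinarith
  set N := √(A ^ 2 + 4 * q ^ 2 * c ^ 2 * (1 - c ^ 2))
  have hN : 0 < N := Real.sqrt_pos.mpr hN_sq_pos
  have hN2 : N ^ 2 = A ^ 2 + 4 * q ^ 2 * c ^ 2 * (1 - c ^ 2) := Real.sq_sqrt hN_sq_pos.le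
  refine ⟨(1 + t) / N, 2 * q / N, ?_, ?_⟩
  · field_simp
    simp only [A] at hN2
    linear_combination (-1 : ℝ) * hN2
  · rw [helstromError, ← ht, Real.sqrt_sq ht₀]
    field_simp
    simp only [A] at hN2
    rw [hN2]
    rw [show p = 1 - q by linarith] at ht ⊢
    linear_combination (t + 1 - 2 * q * c ^ 2) * ht

section
variable {𝕜 ι : Type*} [RCLike 𝕜] [Fintype ι]

theorem norm_dotProduct_mulVec_le_sqrt {M : Matrix ι ι 𝕜} (hM : M.PosSemidef) (x y : ι → 𝕜) :
    ‖star x ⬝ᵥ M *ᵥ y‖ ≤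
      √(RCLike.re (star x ⬝ᵥ M *ᵥ x) * RCLike.re (star y ⬝ᵥ M *ᵥ y)) := by
  let := M.toSeminormedAddCommGroup hM
  let := M.toInnerProductSpace hM
  have h := inner_mul_inner_self_le (𝕜 := 𝕜) x y
  rw [norm_inner_symm y x, ← sq] at h
  have hM_inner (a b : ι → 𝕜) : (inner 𝕜 a b : 𝕜) = star a ⬝ᵥ M *ᵥ b := dotProduct_comm _ _
  simp only [hM_inner] at h
  exact Real.le_sqrt_of_sq_le h

end

section
variable {ι : Type*} [Fintype ι]

theorem trace_mul_vecMulVec_star (M : Matrix ι ι ℂ) (u : ι → ℂ) :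
    (M * vecMulVec u (star u)).trace = star u ⬝ᵥ M *ᵥ u := by
  rw [mul_vecMulVec, trace_vecMulVec, dotProduct_comm]

variable [DecidableEq ι]

theorem posSemidef_one_sub_vecMulVec {w : ι → ℂ} (hw : star w ⬝ᵥ w = 1) :
    (1 - vecMulVec w (star w)).PosSemidef := by
  set P := vecMulVec w (star w)
  have hPP : P * P = P := by rw [vecMulVec_mul_vecMulVec, hw, one_smul]
  have hPh : Pᴴ = P := by rw [conjTranspose_vecMulVec, star_star]
  have hsq : 1 - P = (1 - P)ᴴ * (1 - P) := by
    rw [conjTranspose_sub, conjTranspose_one, hPh, sub_mul, mul_sub, mul_sub, hPP]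
    noncomm_ring
  rw [hsq]
  exact posSemidef_conjTranspose_mul_self _

def testError (p : ℝ) (ρ : Matrix ι ι ℂ) (q : ℝ) (σ : Matrix ι ι ℂ) (Λ : Matrix ι ι ℂ) : ℝ :=
  p * (((1 - Λ) * ρ).trace).re + q * ((Λ * σ).trace).re

theorem testError_vecMulVec (p q : ℝ) {u : ι → ℂ} (hu : star u ⬝ᵥ u = 1) (v w : ι → ℂ) :
    testError p (vecMulVec u (star u)) q (vecMulVec v (star v)) (vecMulVec w (star w)) =
      p * (1 - ‖star u ⬝ᵥ w‖ ^ 2) + q * ‖star v ⬝ᵥ w‖ ^ 2 := by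
  have h (x : ι → ℂ) : star x ⬝ᵥ vecMulVec w (star w) *ᵥ x = ((‖star x ⬝ᵥ w‖ ^ 2 : ℝ) : ℂ) := by
    rw [vecMulVec_mulVec, op_smul_eq_smul, dotProduct_smul, smul_eq_mul, star_dotProduct,
      mul_comm, Complex.ofReal_pow]
    exact Complex.mul_conj' _
  rw [testError, sub_mul, one_mul, trace_sub, trace_vecMulVec, dotProduct_comm, hu,
    trace_mul_vecMulVec_star, trace_mul_vecMulVec_star, h, h]
  simp only [Complex.sub_re, Complex.one_re, Complex.ofReal_re]

theorem helstromError_le_testError {p q : ℝ} (hp : 0 ≤ p) (hq : 0 ≤ q) (hpq : p + q = 1)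
    {u v : ι → ℂ} (hu : star u ⬝ᵥ u = 1) (hv : star v ⬝ᵥ v = 1) {Λ : Matrix ι ι ℂ}
    (hΛ : Λ.PosSemidef) (hΛ' : (1 - Λ).PosSemidef) :
    helstromError p q (‖star u ⬝ᵥ v‖ ^ 2) ≤
      testError p (vecMulVec u (star u)) q (vecMulVec v (star v)) Λ := by
  have hcompl (x : ι → ℂ) (hx : star x ⬝ᵥ x = 1) :
      (star x ⬝ᵥ (1 - Λ) *ᵥ x).re = 1 - (star x ⬝ᵥ Λ *ᵥ x).re := by
    rw [sub_mulVec, one_mulVec, dotProduct_sub, hx, Complex.sub_re, Complex.one_re]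
  set a := (star u ⬝ᵥ Λ *ᵥ u).re
  set b := (star v ⬝ᵥ Λ *ᵥ v).re
  have ha₀ : 0 ≤ a := hΛ.re_dotProduct_nonneg u
  have hb₀ : 0 ≤ b := hΛ.re_dotProduct_nonneg v
  have hle_one (x : ι → ℂ) (hx : star x ⬝ᵥ x = 1) : (star x ⬝ᵥ Λ *ᵥ x).re ≤ 1 := by
    have := hΛ'.re_dotProduct_nonneg x
    rw [RCLike.re_to_complex, hcompl x hx] at this
    linarith
  have hsplit : ‖star u ⬝ᵥ v‖ ≤ √(a * b) + √((1 - a) * (1 - b)) := by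
    calc ‖star u ⬝ᵥ v‖ = ‖star u ⬝ᵥ Λ *ᵥ v + star u ⬝ᵥ (1 - Λ) *ᵥ v‖ := by
          rw [← dotProduct_add, ← add_mulVec, add_sub_cancel, one_mulVec]
      _ ≤ ‖star u ⬝ᵥ Λ *ᵥ v‖ + ‖star u ⬝ᵥ (1 - Λ) *ᵥ v‖ := norm_add_le _ _
      _ ≤ √(a * b) + √((1 - a) * (1 - b)) := by
          rw [← hcompl u hu, ← hcompl v hv]
          exact add_le_add (norm_dotProduct_mulVec_le_sqrt hΛ u v)
            (norm_dotProduct_mulVec_le_sqrt hΛ' u v)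
  rw [testError, trace_mul_vecMulVec_star, trace_mul_vecMulVec_star, hcompl u hu]
  exact helstromError_le hp hq hpq ha₀ (hle_one u hu) hb₀ (hle_one v hv)
    (pow_le_pow_left₀ (norm_nonneg _) hsplit 2)

theorem exists_testError_eq_helstromError {p q : ℝ} (hpq : p + q = 1) {u v : ι → ℂ}
    (hu : star u ⬝ᵥ u = 1) (hv : star v ⬝ᵥ v = 1) (huv : ‖star u ⬝ᵥ v‖ < 1) :
    ∃ Λ : Matrix ι ι ℂ, Λ.PosSemidef ∧ (1 - Λ).PosSemidef ∧
      testError p (vecMulVec u (star u)) q (vecMulVec v (star v)) Λ =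
        helstromError p q (‖star u ⬝ᵥ v‖ ^ 2) := by
  obtain ⟨κ, huv_eq⟩ : ∃ κ, star u ⬝ᵥ v = κ := ⟨_, rfl⟩
  obtain ⟨c, hc⟩ : ∃ c, ‖κ‖ = c := ⟨_, rfl⟩
  rw [huv_eq, hc] at huv ⊢
  obtain ⟨a, b, hab, herr⟩ := exists_helstrom_coeffs hpq (hc ▸ norm_nonneg κ) huv
  set w : ι → ℂ := (a : ℂ) • u - (b * starRingEnd ℂ κ) • v with hw
  have hvu : star v ⬝ᵥ u = starRingEnd ℂ κ := by rw [star_dotProduct, huv_eq]; rfl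
  have hκ : starRingEnd ℂ κ * κ = (c : ℂ) ^ 2 := by rw [Complex.conj_mul', hc]
  have huw : star u ⬝ᵥ w = ((a - b * c ^ 2 : ℝ) : ℂ) := by
    simp only [w, dotProduct_sub, dotProduct_smul, hu, huv_eq, smul_eq_mul]
    push_cast
    linear_combination (-b : ℂ) * hκ
  have hvw : star v ⬝ᵥ w = starRingEnd ℂ κ * ((a - b : ℝ) : ℂ) := by
    simp only [w, dotProduct_sub, dotProduct_smul, hv, hvu, smul_eq_mul]
    push_cast
    ring
  have hww : star w ⬝ᵥ w = 1 := by
    nth_rewrite 2 [hw]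
    rw [dotProduct_sub, dotProduct_smul, dotProduct_smul, star_dotProduct w u,
      star_dotProduct w v, huw, hvw]
    simp only [smul_eq_mul, star_mul', Complex.star_def, Complex.conj_conj, Complex.conj_ofReal]
    have hab' : (a : ℂ) ^ 2 - 2 * a * b * c ^ 2 + b ^ 2 * c ^ 2 = 1 := by exact_mod_cast hab
    push_cast
    linear_combination (-(b : ℂ) * (a - b)) * hκ + hab'
  refine ⟨vecMulVec w (star w), posSemidef_vecMulVec_self_star w,
    posSemidef_one_sub_vecMulVec hww, ?_⟩
  rw [testError_vecMulVec p q hu, huw, hvw, ← herr]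
  simp only [norm_mul, Complex.norm_conj, Complex.norm_real, Real.norm_eq_abs, mul_pow, sq_abs, hc]
  ring

theorem isLeast_testError_vecMulVec {p q : ℝ} (hp : 0 ≤ p) (hq : 0 ≤ q) (hpq : p + q = 1)
    {u v : ι → ℂ} (hu : star u ⬝ᵥ u = 1) (hv : star v ⬝ᵥ v = 1) (huv : ‖star u ⬝ᵥ v‖ < 1) :
    IsLeast {x | ∃ Λ : Matrix ι ι ℂ, Λ.PosSemidef ∧ (1 - Λ).PosSemidef ∧
        x = testError p (vecMulVec u (star u)) q (vecMulVec v (star v)) Λ}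
      (helstromError p q (‖star u ⬝ᵥ v‖ ^ 2)) := by
  refine ⟨?_, ?_⟩
  · obtain ⟨Λ, hΛ, hΛ', h⟩ := exists_testError_eq_helstromError hpq hu hv huv
    exact ⟨Λ, hΛ, hΛ', h.symm⟩
  · rintro _ ⟨Λ, hΛ, hΛ', rfl⟩
    exact helstromError_le_testError hp hq hpq hu hv hΛ hΛ'

end

def tensorPowVec {ι : Type*} (u : ι → ℂ) (n : ℕ) : (Fin n → ι) → ℂ := fun i => ∏ k, u (i k)

theorem star_tensorPowVec_dotProduct {ι : Type*} [Fintype ι] (x y : ι → ℂ) (n : ℕ) :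
    star (tensorPowVec x n) ⬝ᵥ tensorPowVec y n = (star x ⬝ᵥ y) ^ n := by
  simp only [dotProduct, Fintype.sum_pow, tensorPowVec, Pi.star_apply, star_prod,
    Finset.prod_mul_distrib]

theorem tensorPow_vecMulVec {d : ℕ} (u : Fin d → ℂ) (n : ℕ) :
    tensorPow (vecMulVec u (star u)) n =
      vecMulVec (tensorPowVec u n) (star (tensorPowVec u n)) := by
  ext i j
  simp [tensorPow, tensorPowVec, vecMulVec_apply, Finset.prod_mul_distrib, star_prod]

theorem pErr_vecMulVec {d : ℕ} {p q : ℝ} (hp : 0 ≤ p) (hq : 0 ≤ q) (hpq : p + q = 1)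
    {u v : Fin d → ℂ} (hu : star u ⬝ᵥ u = 1) (hv : star v ⬝ᵥ v = 1) (huv : ‖star u ⬝ᵥ v‖ < 1)
    {n : ℕ} (hn : n ≠ 0) :
    pErr p (vecMulVec u (star u)) q (vecMulVec v (star v)) n =
      helstromError p q ((‖star u ⬝ᵥ v‖ ^ 2) ^ n) := by
  have hdot (x y : Fin d → ℂ) := star_tensorPowVec_dotProduct x y n
  rw [pErr, tensorPow_vecMulVec, tensorPow_vecMulVec, ← pow_right_comm, ← norm_pow, ← hdot]
  refine (isLeast_testError_vecMulVec hp hq hpq ?_ ?_ ?_).csInf_eq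
  · rw [hdot, hu, one_pow]
  · rw [hdot, hv, one_pow]
  · rw [hdot, norm_pow]
    exact pow_lt_one₀ (norm_nonneg _) huv hn

theorem helstromError_le_iff {p q ε x : ℝ} (hp : 0 < p) (hq : 0 < q) (hpq : p + q = 1)
    (hε : ε ≤ 1 / 2) (hx : x ≤ 1) :
    helstromError p q x ≤ ε ↔ x ≤ ε * (1 - ε) / (p * q) := by
  have h4pq : 4 * p * q ≤ 1 := by nlinarith [sq_nonneg (p - q)]
  have hrad : 0 ≤ 1 - 4 * p * q * x := by
    rcases le_total 0 x with h | h <;> nlinarith [mul_pos hp hq]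
  rw [helstromError, div_le_iff₀ two_pos, sub_le_comm, Real.le_sqrt (by linarith) hrad,
    le_div_iff₀ (mul_pos hp hq)]
  constructor <;> intro h <;> nlinarith

theorem pow_le_iff_log_div_log_le {F r : ℝ} (hF₀ : 0 < F) (hF₁ : F < 1) (hr : 0 < r) (n : ℕ) :
    F ^ n ≤ r ↔ Real.log r / Real.log F ≤ n := by
  rw [← Real.log_le_log_iff (pow_pos hF₀ n) hr, Real.log_pow,
    div_le_iff_of_neg (Real.log_neg hF₀ hF₁)]

theorem sInf_one_le_and_eq_ceil {P : ℕ → Prop} {x : ℝ} (hx : 0 < x)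
    (hP : ∀ n, 1 ≤ n → (P n ↔ x ≤ n)) :
    sInf {n : ℕ | 1 ≤ n ∧ P n} = ⌈x⌉₊ := by
  have hset : {n : ℕ | 1 ≤ n ∧ P n} = Set.Ici ⌈x⌉₊ := by
    ext n
    simp only [Set.mem_ofPred_eq, Set.mem_Ici, Nat.ceil_le]
    constructor
    · rintro ⟨hn, h⟩
      exact (hP n hn).mp h
    · intro h
      have hn : 1 ≤ n := by exact_mod_cast (Nat.one_le_ceil_iff.mpr hx).trans (Nat.ceil_le.mpr h)
      exact ⟨hn, (hP n hn).mpr h⟩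
  rw [hset, csInf_Ici]

/-- **Sample complexity of symmetric binary quantum hypothesis testing for two
pure states**: `n*(p, ψψ*, q, φφ*, ε) = ⌈ ln(pq/(ε(1-ε))) / (−ln F) ⌉` where
`F = |⟨ψ,φ⟩|²`. -/
theorem sample_complexity_pure {d : ℕ} (ψ φ : EuclideanSpace ℂ (Fin d))
    (hψ : ‖ψ‖ = 1) (hφ : ‖φ‖ = 1)
    (p q ε : ℝ) (hp : p ∈ Set.Ioo (0 : ℝ) 1) (hq : q = 1 - p)
    (hε : ε ∈ Set.Ioo 0 (min p q))
    (F : ℝ) (hF : F = ‖(inner ℂ ψ φ : ℂ)‖ ^ 2)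
    (hF0 : 0 < F) (hF1 : F < 1) :
    (sampleComplexity p (Matrix.of fun i j => ψ i * starRingEnd ℂ (ψ j)) q
        (Matrix.of fun i j => φ i * starRingEnd ℂ (φ j)) ε : ℤ)
      = ⌈Real.log (p * q / (ε * (1 - ε))) / (-Real.log F)⌉ := by
  obtain ⟨hp₀, -⟩ := hp
  obtain ⟨hε₀, hε_lt⟩ := hε
  have hεp : ε < p := hε_lt.trans_le (min_le_left p q)
  have hεq : ε < q := hε_lt.trans_le (min_le_right p q)
  have hpq : p + q = 1 := by rw [hq]; ring
  have hq₀ : 0 < q := by linarith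
  have hunit (x : EuclideanSpace ℂ (Fin d)) (hx : ‖x‖ = 1) : star x.ofLp ⬝ᵥ x.ofLp = 1 := by
    rw [dotProduct_comm, ← EuclideanSpace.inner_eq_star_dotProduct, inner_self_eq_norm_sq_to_K, hx]
    norm_num
  have hFdot : ‖star ψ.ofLp ⬝ᵥ φ.ofLp‖ ^ 2 = F := by
    rw [hF, EuclideanSpace.inner_eq_star_dotProduct, dotProduct_comm]
  have hF_lt : ‖star ψ.ofLp ⬝ᵥ φ.ofLp‖ < 1 := by
    rw [← abs_of_nonneg (norm_nonneg _), ← sq_lt_one_iff_abs_lt_one, hFdot]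
    exact hF1
  have hgap : ε * (1 - ε) < p * q := by nlinarith
  have hεε : 0 < ε * (1 - ε) := by nlinarith
  have hthreshold : 0 < Real.log (p * q / (ε * (1 - ε))) / (-Real.log F) :=
    div_pos (Real.log_pos ((one_lt_div hεε).mpr hgap))
      (neg_pos.mpr (Real.log_neg hF0 hF1))
  have hsufficient (n : ℕ) (hn : 1 ≤ n) :
      pErr p (vecMulVec ψ.ofLp (star ψ.ofLp)) q (vecMulVec φ.ofLp (star φ.ofLp)) n ≤ ε ↔
        Real.log (p * q / (ε * (1 - ε))) / (-Real.log F) ≤ n := by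
    rw [pErr_vecMulVec hp₀.le hq₀.le hpq (hunit ψ hψ) (hunit φ hφ) hF_lt (by omega), hFdot,
      helstromError_le_iff hp₀ hq₀ hpq (by linarith) (pow_le_one₀ hF0.le hF1.le),
      pow_le_iff_log_div_log_le hF0 hF1 (div_pos hεε (mul_pos hp₀ hq₀)), ← inv_div (p * q),
      Real.log_inv, neg_div, div_neg]
  rw [sampleComplexity, ← Int.natCast_ceil_eq_ceil hthreshold.le]
  exact congrArg _ (sInf_one_le_and_eq_ceil hthreshold hsufficient)

end QHT

end
end
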